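/- arXiv:1605.01432 — 2 statements merged into one kernel-verified Lean document; each statement's English description precedes it below -/
import Mathlib

section
/- If a permutation class C is splittable, then C ⊆ D ⊙ E for some two proper subclasses D, E of C. -/
/-- A permutation of some finite length `n`, as a bijection of `Fin n`. -/
abbrev PPerm : Type := Σ n : ℕ, Equiv.Perm (Fin n)

/-- `Contains π σ` : the pattern `σ` occurs in (is contained in) `π`. -/
def Contains (π σ : PPerm) : Prop :=
  ∃ f : Fin σ.1 → Fin π.1, StrictMono f ∧
    ∀ i j, σ.2 i < σ.2 j ↔ π.2 (f i) < π.2 (f j)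

/-- A permutation class: a set of permutations closed downwards under containment. -/
def IsPermClass (C : Set PPerm) : Prop :=
  ∀ π ∈ C, ∀ σ : PPerm, Contains π σ → σ ∈ C

/-- `σ` is (exactly) the pattern of the set `S` of points of `π`. -/
def PatternOf (π : PPerm) (S : Set (Fin π.1)) (σ : PPerm) : Prop :=
  ∃ f : Fin σ.1 → Fin π.1, StrictMono f ∧ Set.range f = S ∧
    ∀ i j, σ.2 i < σ.2 j ↔ π.2 (f i) < π.2 (f j)

/-- The points of `π` lying in `S` contain an occurrence of `σ`. -/
def ContainsIn (π : PPerm) (S : Set (Fin π.1)) (σ : PPerm) : Prop :=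
  ∃ f : Fin σ.1 → Fin π.1, StrictMono f ∧ (∀ i, f i ∈ S) ∧
    ∀ i j, σ.2 i < σ.2 j ↔ π.2 (f i) < π.2 (f j)

/-- `π` is a merge of `σ` and `τ`: its points split into a part with pattern `σ`
and a part with pattern `τ`. -/
def IsMerge (π σ τ : PPerm) : Prop :=
  ∃ S : Set (Fin π.1), PatternOf π S σ ∧ PatternOf π Sᶜ τ

/-- Merge of two classes. -/
def MergeCl (C D : Set PPerm) : Set PPerm :=
  {π | ∃ σ ∈ C, ∃ τ ∈ D, IsMerge π σ τ}

/-- The empty permutation. -/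
def pempty : PPerm := ⟨0, 1⟩

/-- The singleton permutation `1`. -/
def pone : PPerm := ⟨1, 1⟩

/-- Iterated merge of a list of classes. -/
def MergeAll : List (Set PPerm) → Set PPerm
  | [] => {pempty}
  | [C] => C
  | C :: D :: Cs => MergeCl C (MergeAll (D :: Cs))

/-- A class is splittable if it is contained in the merge of finitely many
of its proper subclasses. -/
def Splittable (C : Set PPerm) : Prop :=
  ∃ Cs : List (Set PPerm), Cs ≠ [] ∧
    (∀ D ∈ Cs, IsPermClass D ∧ D ⊆ C ∧ D ≠ C) ∧ C ⊆ MergeAll Cs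

/-- A class is atomic if it is not the union of two proper subclasses. -/
def Atomic (C : Set PPerm) : Prop :=
  ¬ ∃ D E : Set PPerm, IsPermClass D ∧ IsPermClass E ∧
      D ⊆ C ∧ D ≠ C ∧ E ⊆ C ∧ E ≠ C ∧ C = D ∪ E

/-- Inflation `A[B]` of a class `A` by a class `B`: `π` decomposes into
consecutive nonempty blocks (given by the fibres of the monotone surjection `g`),
the relative order of distinct blocks follows `σ ∈ A`, and each block has its
pattern in `B`. -/
def Inflate (A B : Set PPerm) : Set PPerm :=
  {π | ∃ σ ∈ A, ∃ g : Fin π.1 → Fin σ.1, Monotone g ∧ Function.Surjective g ∧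
    (∀ p q, g p ≠ g q → (π.2 p < π.2 q ↔ σ.2 (g p) < σ.2 (g q))) ∧
    ∀ b : Fin σ.1, ∃ τ ∈ B, PatternOf π {p | g p = b} τ}

/-- Direct sum `σ ⊕ τ`. -/
def psum (σ τ : PPerm) : PPerm :=
  ⟨σ.1 + τ.1, finSumFinEquiv.permCongr (σ.2.sumCongr τ.2)⟩

/-- Skew sum `σ ⊖ τ`. -/
def pskew (σ τ : PPerm) : PPerm :=
  ⟨σ.1 + τ.1,
    finSumFinEquiv.symm.trans ((σ.2.sumCongr τ.2).trans
      ((Equiv.sumComm (Fin σ.1) (Fin τ.1)).trans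
        (finSumFinEquiv.trans (finCongr (Nat.add_comm τ.1 σ.1)))))⟩

/-- Sum-decomposable: a direct sum of two nonempty permutations. -/
def SumDecomp (π : PPerm) : Prop :=
  ∃ σ τ : PPerm, 0 < σ.1 ∧ 0 < τ.1 ∧ π = psum σ τ

/-- Skew-decomposable: a skew sum of two nonempty permutations. -/
def SkewDecomp (π : PPerm) : Prop :=
  ∃ σ τ : PPerm, 0 < σ.1 ∧ 0 < τ.1 ∧ π = pskew σ τ

def SumClosed (C : Set PPerm) : Prop := ∀ σ ∈ C, ∀ τ ∈ C, psum σ τ ∈ C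

def SkewClosed (C : Set PPerm) : Prop := ∀ σ ∈ C, ∀ τ ∈ C, pskew σ τ ∈ C

/-- The class of permutations avoiding the pattern `σ`. -/
def Av (σ : PPerm) : Set PPerm := {π | ¬ Contains π σ}

/-- The basis of a class: minimal permutations not belonging to it. -/
def PBasis (C : Set PPerm) : Set PPerm :=
  {π | π ∉ C ∧ ∀ σ : PPerm, Contains π σ → σ ≠ π → σ ∈ C}

/-- An interval of `π`: a set of points contiguous in positions and in values. -/
def IsInterval (π : PPerm) (S : Set (Fin π.1)) : Prop :=
  (∀ a ∈ S, ∀ b ∈ S, ∀ c, a ≤ c → c ≤ b → c ∈ S) ∧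
  (∀ a ∈ S, ∀ b ∈ S, ∀ c, π.2 a ≤ π.2 c → π.2 c ≤ π.2 b → c ∈ S)

/-- A simple permutation: its only intervals are the subsingletons and the whole. -/
def SimplePerm (π : PPerm) : Prop :=
  ∀ S : Set (Fin π.1), IsInterval π S → S.Subsingleton ∨ S = Set.univ

/-- Build a permutation from a function with an explicit inverse. -/
def mkP {n : ℕ} (f g : Fin n → Fin n)
    (h₁ : ∀ i, g (f i) = i) (h₂ : ∀ i, f (g i) = i) : PPerm :=
  ⟨n, ⟨f, g, h₁, h₂⟩⟩

def p12 : PPerm := ⟨2, 1⟩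
def p21 : PPerm := mkP ![1,0] ![1,0] (by decide) (by decide)
def p213 : PPerm := mkP ![1,0,2] ![1,0,2] (by decide) (by decide)
def p231 : PPerm := mkP ![1,2,0] ![2,0,1] (by decide) (by decide)
def p312 : PPerm := mkP ![2,0,1] ![1,2,0] (by decide) (by decide)
def p1234 : PPerm := ⟨4, 1⟩
def p2143 : PPerm := mkP ![1,0,3,2] ![1,0,3,2] (by decide) (by decide)
def p3412 : PPerm := mkP ![2,3,0,1] ![2,3,0,1] (by decide) (by decide)
def p4321 : PPerm := mkP ![3,2,1,0] ![3,2,1,0] (by decide) (by decide)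
def p2413 : PPerm := mkP ![1,3,0,2] ![2,0,3,1] (by decide) (by decide)
def p3142 : PPerm := mkP ![2,0,3,1] ![1,3,0,2] (by decide) (by decide)

/-- The class `I` of increasing permutations. -/
def IncCl : Set PPerm := Av p21
/-- The class `D` of decreasing permutations. -/
def DecCl : Set PPerm := Av p12
/-- The class `Av(213)`. -/
def Av213 : Set PPerm := Av p213
/-- The class `L = Av(231, 312)` of layered permutations. -/
def Layered : Set PPerm := Av p231 ∩ Av p312
/-- Separable permutations, characterised by avoidance of `2413` and `3142`. -/
def SepA : Set PPerm := Av p2413 ∩ Av p3142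
/-- Separable permutations avoiding every element of `F`. -/
def Avs (F : Set PPerm) : Set PPerm := {π ∈ SepA | ∀ τ ∈ F, ¬ Contains π τ}
/-- The class of separable permutations, defined as the smallest permutation class
containing `1` and closed under direct sums and skew sums. -/
def SepCl : Set PPerm :=
  ⋂₀ {C : Set PPerm | IsPermClass C ∧ pone ∈ C ∧
      ∀ σ ∈ C, ∀ τ ∈ C, psum σ τ ∈ C ∧ pskew σ τ ∈ C}
lemma contains_refl (π : PPerm) : Contains π π :=
  ⟨id, strictMono_id, fun _ _ => Iff.rfl⟩

lemma contains_trans {π σ τ : PPerm} (h1 : Contains π σ) (h2 : Contains σ τ) :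
    Contains π τ := by
  obtain ⟨f, hf, hof⟩ := h1
  obtain ⟨g, hg, hog⟩ := h2
  exact ⟨f ∘ g, hf.comp hg, fun i j => (hog i j).trans (hof _ _)⟩

/-- The downward closure of a set of permutations under containment. -/
def Dcl (X : Set PPerm) : Set PPerm := {σ | ∃ ρ ∈ X, Contains ρ σ}

lemma subset_dcl (X : Set PPerm) : X ⊆ Dcl X := fun π hπ => ⟨π, hπ, contains_refl π⟩

lemma dcl_isPermClass (X : Set PPerm) : IsPermClass (Dcl X) := by
  rintro π ⟨ρ, hρ, hc⟩ σ h
  exact ⟨ρ, hρ, contains_trans hc h⟩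

lemma dcl_eq {X : Set PPerm} (hX : IsPermClass X) : Dcl X = X := by
  refine subset_antisymm ?_ (subset_dcl X)
  rintro σ ⟨ρ, hρ, hc⟩
  exact hX ρ hρ σ hc

lemma contains_of_pattern {π σ : PPerm} {S : Set (Fin π.1)} (h : PatternOf π S σ) :
    Contains π σ := by
  obtain ⟨f, hf, _, ho⟩ := h
  exact ⟨f, hf, ho⟩

/-- Every subset of the points of a permutation has a pattern. -/
lemma patternOf_exists (π : PPerm) (S : Set (Fin π.1)) : ∃ σ : PPerm, PatternOf π S σ := by
  classical
  set s : Finset (Fin π.1) := S.toFinset with hs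
  set k := s.card with hk
  let f0 : Fin k ≃o s := s.orderIsoOfFin rfl
  let f : Fin k → Fin π.1 := fun i => (f0 i : Fin π.1)
  have hf : StrictMono f := fun i j hij => f0.strictMono hij
  have hrange : Set.range f = S := by
    ext x
    constructor
    · rintro ⟨i, rfl⟩
      exact Set.mem_toFinset.mp (f0 i).2
    · intro hx
      have hx' : x ∈ s := by simpa [hs] using hx
      exact ⟨f0.symm ⟨x, hx'⟩, by simp [f]⟩
  let v : Fin k → Fin π.1 := fun i => π.2 (f i)
  have hv : Function.Injective v := fun i j hij => hf.injective (π.2.injective hij)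
  let t : Finset (Fin π.1) := Finset.image v Finset.univ
  have ht : t.card = k := by
    rw [Finset.card_image_of_injective _ hv, Finset.card_univ, Fintype.card_fin]
  let g0 : Fin k ≃o t := t.orderIsoOfFin ht
  have hmem : ∀ i, v i ∈ t := fun i => Finset.mem_image_of_mem v (Finset.mem_univ i)
  let p : Fin k → Fin k := fun i => g0.symm ⟨v i, hmem i⟩
  have hpinj : Function.Injective p := by
    intro i j hij
    apply hv
    have := g0.symm.injective.eq_iff.mp hij
    exact congrArg Subtype.val this
  have hpbij : Function.Bijective p := Finite.injective_iff_bijective.mp hpinj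
  refine ⟨⟨k, Equiv.ofBijective p hpbij⟩, f, hf, hrange, ?_⟩
  intro i j
  show p i < p j ↔ _
  rw [show (p i < p j) ↔ ((⟨v i, hmem i⟩ : t) < ⟨v j, hmem j⟩) from g0.symm.lt_iff_lt]
  exact Subtype.mk_lt_mk

/-- Pulling back a pattern along a containment embedding. -/
lemma contains_of_preimage {π ρ σ π' : PPerm}
    (f : Fin π.1 → Fin ρ.1) (hf : StrictMono f)
    (hfo : ∀ i j, π.2 i < π.2 j ↔ ρ.2 (f i) < ρ.2 (f j))
    (S : Set (Fin ρ.1))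
    (hσ : PatternOf ρ S σ) (hπ' : PatternOf π (f ⁻¹' S) π') :
    Contains σ π' := by
  obtain ⟨g, hg, hgr, hgo⟩ := hσ
  obtain ⟨h, hh, hhr, hho⟩ := hπ'
  have hmem : ∀ i, ∃ j, g j = f (h i) := by
    intro i
    have h1 : h i ∈ f ⁻¹' S := hhr ▸ Set.mem_range_self i
    have h2 : f (h i) ∈ Set.range g := hgr ▸ h1
    exact h2
  choose e he using hmem
  have hemono : StrictMono e := by
    intro i j hij
    have : g (e i) < g (e j) := by
      rw [he i, he j]; exact hf (hh hij)
    exact hg.lt_iff_lt.mp this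
  refine ⟨e, hemono, fun i j => ?_⟩
  rw [hho, hfo, ← he i, ← he j, ← hgo]

/-- A permutation class contained in the downward closure of a merge of two sets
splits over its intersections with the downward closures. -/
lemma merge_step {C A B : Set PPerm} (hC : IsPermClass C)
    (h : C ⊆ Dcl (MergeCl A B)) :
    C ⊆ MergeCl (C ∩ Dcl A) (C ∩ Dcl B) := by
  intro π hπ
  obtain ⟨ρ, ⟨σ, hσA, τ, hτB, S, hS, hSc⟩, f, hf, hfo⟩ := h hπ
  obtain ⟨σ', hσ'⟩ := patternOf_exists π (f ⁻¹' S)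
  obtain ⟨τ', hτ'⟩ := patternOf_exists π (f ⁻¹' S)ᶜ
  have hτ'' : PatternOf π (f ⁻¹' Sᶜ) τ' := by rwa [Set.preimage_compl]
  have hc1 : Contains σ σ' := contains_of_preimage f hf hfo S hS hσ'
  have hc2 : Contains τ τ' := contains_of_preimage f hf hfo Sᶜ hSc hτ''
  exact ⟨σ', ⟨hC π hπ σ' (contains_of_pattern hσ'), σ, hσA, hc1⟩,
    τ', ⟨hC π hπ τ' (contains_of_pattern hτ'), τ, hτB, hc2⟩,
    f ⁻¹' S, hσ', hτ'⟩

lemma stmt3_aux (C : Set PPerm) (hC : IsPermClass C) :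
    ∀ Cs : List (Set PPerm), Cs ≠ [] →
      (∀ D ∈ Cs, IsPermClass D ∧ D ⊆ C ∧ D ≠ C) →
      C ⊆ Dcl (MergeAll Cs) →
      ∃ D E : Set PPerm, IsPermClass D ∧ D ⊆ C ∧ D ≠ C ∧
        IsPermClass E ∧ E ⊆ C ∧ E ≠ C ∧ C ⊆ MergeCl D E
  | [], hne, _, _ => absurd rfl hne
  | [A], _, hprop, hsub => by
    obtain ⟨hAcl, hAC, hAne⟩ := hprop A (by simp)
    have hCA : C ⊆ A := by
      have : Dcl (MergeAll [A]) = A := by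
        show Dcl A = A
        exact dcl_eq hAcl
      rw [this] at hsub
      exact hsub
    exact absurd (subset_antisymm hAC hCA) hAne
  | A :: B :: rest, _, hprop, hsub => by
    obtain ⟨hAcl, hAC, hAne⟩ := hprop A (by simp)
    have hsub' : C ⊆ Dcl (MergeCl A (MergeAll (B :: rest))) := hsub
    have key := merge_step hC hsub'
    by_cases hE : C ∩ Dcl (MergeAll (B :: rest)) = C
    · refine stmt3_aux C hC (B :: rest) (by simp) (fun D hD => hprop D (by simp [hD])) ?_
      rw [← hE]
      exact Set.inter_subset_right
    · refine ⟨C ∩ Dcl A, C ∩ Dcl (MergeAll (B :: rest)), ?_, Set.inter_subset_left, ?_,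
        ?_, Set.inter_subset_left, hE, key⟩
      · intro π hπ σ hc
        exact ⟨hC π hπ.1 σ hc, dcl_isPermClass A π hπ.2 σ hc⟩
      · rw [dcl_eq hAcl]
        intro hcontra
        apply hAne
        apply subset_antisymm hAC
        intro π hπ
        have hmem : π ∈ C ∩ A := by rw [hcontra]; exact hπ
        exact hmem.2
      · intro π hπ σ hc
        exact ⟨hC π hπ.1 σ hc, dcl_isPermClass _ π hπ.2 σ hc⟩

/-- If a class is splittable then it is contained in the merge of just two of its
proper subclasses. -/
theorem stmt3 (C : Set PPerm) (hC : IsPermClass C) (h : Splittable C) :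
    ∃ D E : Set PPerm, IsPermClass D ∧ D ⊆ C ∧ D ≠ C ∧
      IsPermClass E ∧ E ⊆ C ∧ E ≠ C ∧ C ⊆ MergeCl D E := by
  obtain ⟨Cs, hne, hprop, hsub⟩ := h
  exact stmt3_aux C hC Cs hne hprop (fun π hπ => subset_dcl _ (hsub hπ))
end

section
/- A permutation class C satisfies C = C[C] (is closed under inflation) if and only if every basis element of C is simple. -/
open Function

theorem Equiv.Perm.eq_of_lt_iff_lt {n : ℕ} {a b : Equiv.Perm (Fin n)}
    (h : ∀ i j, a i < a j ↔ b i < b j) : a = b := by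
  have hmono : StrictMono (b ∘ a.symm) := fun x y hxy => by
    simpa using (h (a.symm x) (a.symm y)).mp (by simpa using hxy)
  ext i
  simpa using congrArg Fin.val (hmono.apply_eq (x := a i)).symm

theorem exists_perm_lt_iff_lt {α : Type*} [LinearOrder α] {k : ℕ} {v : Fin k → α}
    (hv : Injective v) : ∃ ρ : Equiv.Perm (Fin k), ∀ i j, ρ i < ρ j ↔ v i < v j := by
  set σ := Tuple.sort v
  have hsorted : StrictMono (v ∘ σ) :=
    (Tuple.monotone_sort v).strictMono_of_injective (hv.comp σ.injective)
  refine ⟨σ.symm, fun i j => ?_⟩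
  simpa using hsorted.lt_iff_lt (a := σ.symm i) (b := σ.symm j) |>.symm

theorem exists_monotone_surjective_comp_eq {α β γ : Type*} [Preorder α] [LinearOrder β]
    [LinearOrder γ] {e : β → γ} (he : StrictMono e) {φ : α → γ} (hφ : Monotone φ)
    (hrange : Set.range φ = Set.range e) :
    ∃ g : α → β, Monotone g ∧ Surjective g ∧ e ∘ g = φ := by
  choose g hg using fun p => (hrange ▸ Set.mem_range_self p : φ p ∈ Set.range e)
  refine ⟨g, fun p q hpq => he.le_iff_le.mp (by simpa only [hg] using hφ hpq), fun b => ?_,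
    funext hg⟩
  obtain ⟨p, hp⟩ := (hrange.symm ▸ Set.mem_range_self b : e b ∈ Set.range φ)
  exact ⟨p, he.injective (by rw [hg, hp])⟩

namespace Contains

theorem refl (π : PPerm) : Contains π π :=
  ⟨id, strictMono_id, fun _ _ => Iff.rfl⟩

theorem trans {π σ ρ : PPerm} (h₁ : Contains π σ) (h₂ : Contains σ ρ) : Contains π ρ := by
  obtain ⟨f, hf, hfπ⟩ := h₁
  obtain ⟨g, hg, hgσ⟩ := h₂
  exact ⟨f ∘ g, hf.comp hg, fun i j => (hgσ i j).trans (hfπ _ _)⟩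

theorem length_le {π σ : PPerm} (h : Contains π σ) : σ.1 ≤ π.1 := by
  obtain ⟨f, hf, -⟩ := h
  simpa using Fintype.card_le_of_injective f hf.injective

theorem eq_of_length_eq {π σ : PPerm} (h : Contains π σ) (hlen : σ.1 = π.1) : σ = π := by
  obtain ⟨n, a⟩ := π
  obtain ⟨m, b⟩ := σ
  obtain rfl : m = n := hlen
  obtain ⟨f, hf, hfa⟩ := h
  have hf_id : ∀ i, f i = i := fun i => hf.apply_eq
  exact congrArg (Sigma.mk m) (Equiv.Perm.eq_of_lt_iff_lt fun i j => by rw [hfa, hf_id, hf_id])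

end Contains

namespace PatternOf

theorem contains {π σ : PPerm} {S : Set (Fin π.1)} (h : PatternOf π S σ) : Contains π σ := by
  obtain ⟨f, hf, -, hfπ⟩ := h
  exact ⟨f, hf, hfπ⟩

theorem length_lt {π σ : PPerm} {S : Set (Fin π.1)} (h : PatternOf π S σ)
    (hS : S ≠ Set.univ) : σ.1 < π.1 := by
  obtain ⟨f, hf, rfl, -⟩ := h
  refine (by simpa using Fintype.card_le_of_injective f hf.injective : σ.1 ≤ π.1).lt_of_ne
    fun hlen => hS (Set.range_eq_univ.mpr ?_)
  exact ((Fintype.bijective_iff_injective_and_card f).mpr ⟨hf.injective, by simpa using hlen⟩).2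

end PatternOf

theorem exists_patternOf (π : PPerm) (S : Set (Fin π.1)) : ∃ σ, PatternOf π S σ := by
  classical
  set f := S.toFinset.orderEmbOfFin rfl
  obtain ⟨ρ, hρ⟩ := exists_perm_lt_iff_lt (π.2.injective.comp f.injective)
  exact ⟨⟨_, ρ⟩, f, f.strictMono, by simp [f], hρ⟩

theorem patternOf_singleton (π : PPerm) (p : Fin π.1) : PatternOf π {p} pone := by
  have hpone : ∀ i j : Fin pone.1, i = j := Subsingleton.elim (α := Fin 1)
  refine ⟨fun _ => p, fun i j hij => absurd hij (hpone i j ▸ lt_irrefl i), ?_, fun i j => ?_⟩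
  · exact @Set.range_const _ _ ⟨⟨0, Nat.one_pos⟩⟩ p
  · rw [hpone i j]
    exact iff_of_false (lt_irrefl _) (lt_irrefl _)

theorem contains_pone {π : PPerm} (h : 0 < π.1) : Contains π pone :=
  (patternOf_singleton π ⟨0, h⟩).contains

theorem ContainsIn.contains_of_patternOf {π β τ : PPerm} {S : Set (Fin π.1)}
    (hβ : ContainsIn π S β) (hτ : PatternOf π S τ) : Contains τ β := by
  obtain ⟨f, hf, hfS, hfπ⟩ := hβ
  obtain ⟨e, he, rfl, heπ⟩ := hτ
  choose g hg using hfS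
  refine ⟨g, fun i j hij => he.lt_iff_lt.mp ?_, fun i j => ?_⟩
  · simpa only [hg] using hf hij
  · rw [hfπ, heπ, hg, hg]

theorem exists_mem_pBasis_contains {C : Set PPerm} {π : PPerm} (hπ : π ∉ C) :
    ∃ β ∈ PBasis C, Contains π β := by
  classical
  have hex : ∃ m, ∃ β : PPerm, Contains π β ∧ β ∉ C ∧ β.1 = m := ⟨_, π, .refl π, hπ, rfl⟩
  obtain ⟨β, hπβ, hβC, hβm⟩ := Nat.find_spec hex
  refine ⟨β, ⟨hβC, fun ρ hβρ hρβ => ?_⟩, hπβ⟩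
  by_contra hρC
  have hmin := Nat.find_min' hex ⟨ρ, hπβ.trans hβρ, hρC, rfl⟩
  exact hρβ (hβρ.eq_of_length_eq (by have := hβρ.length_le; omega))

theorem mem_of_mem_pBasis_of_length_lt {C : Set PPerm} {β σ : PPerm} (hβ : β ∈ PBasis C)
    (h : Contains β σ) (hlen : σ.1 < β.1) : σ ∈ C :=
  hβ.2 σ h (by rintro rfl; exact lt_irrefl _ hlen)

open Classical in
noncomputable def collapseTo {α : Type*} (S : Set α) (x : α) (p : α) : α :=
  if p ∈ S then x else p

section Collapse

variable {α : Type*} {S : Set α} {x : α}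

theorem collapseTo_of_mem {p : α} (hp : p ∈ S) : collapseTo S x p = x := if_pos hp

theorem collapseTo_of_notMem {p : α} (hp : p ∉ S) : collapseTo S x p = p := if_neg hp

theorem range_collapseTo (hx : x ∈ S) : Set.range (collapseTo S x) = insert x Sᶜ := by
  ext q
  refine ⟨?_, fun hq => hq.elim (fun h => ⟨x, (collapseTo_of_mem hx).trans h.symm⟩)
    fun h => ⟨q, collapseTo_of_notMem h⟩⟩
  rintro ⟨p, rfl⟩
  by_cases hp : p ∈ S
  · exact .inl (collapseTo_of_mem hp)
  · exact .inr (by rwa [collapseTo_of_notMem hp])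

theorem setOf_collapseTo_eq_self (hx : x ∈ S) : {p | collapseTo S x p = x} = S := by
  ext p
  by_cases hp : p ∈ S
  · simp [hp, collapseTo_of_mem hp]
  · simpa [hp, collapseTo_of_notMem hp] using (ne_of_mem_of_not_mem hx hp).symm

theorem setOf_collapseTo_eq_of_notMem (hx : x ∈ S) {q : α} (hq : q ∉ S) :
    {p | collapseTo S x p = q} = {q} := by
  ext p
  by_cases hp : p ∈ S
  · change collapseTo S x p = q ↔ p = q
    rw [collapseTo_of_mem hp]
    exact iff_of_false (fun h => hq (h ▸ hx)) (fun h => hq (h ▸ hp))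
  · simp [collapseTo_of_notMem hp]

end Collapse

namespace IsInterval

variable {π : PPerm} {S : Set (Fin π.1)} {x : Fin π.1}

theorem monotone_collapseTo (hS : IsInterval π S) (hx : x ∈ S) : Monotone (collapseTo S x) := by
  intro p q hpq
  by_cases hp : p ∈ S <;> by_cases hq : q ∈ S <;>
    simp only [collapseTo_of_mem, collapseTo_of_notMem, hp, hq, not_false_eq_true]
  · exact le_rfl
  · by_contra! hqx
    exact hq (hS.1 p hp x hx q hpq hqx.le)
  · by_contra! hxp
    exact hp (hS.1 x hx q hq p hxp.le hpq)
  · exact hpq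

theorem lt_of_lt_of_notMem (hS : IsInterval π S) {a b q : Fin π.1} (ha : a ∈ S) (hb : b ∈ S)
    (hq : q ∉ S) (h : π.2 a < π.2 q) : π.2 b < π.2 q := by
  by_contra! h'
  exact hq (hS.2 a ha b hb q h.le h')

theorem lt_of_gt_of_notMem (hS : IsInterval π S) {a b q : Fin π.1} (ha : a ∈ S) (hb : b ∈ S)
    (hq : q ∉ S) (h : π.2 q < π.2 a) : π.2 q < π.2 b := by
  by_contra! h'
  exact hq (hS.2 b hb a ha q h' h.le)

theorem lt_iff_collapseTo_lt (hS : IsInterval π S) (hx : x ∈ S) {p q : Fin π.1}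
    (hpq : collapseTo S x p ≠ collapseTo S x q) :
    π.2 p < π.2 q ↔ π.2 (collapseTo S x p) < π.2 (collapseTo S x q) := by
  by_cases hp : p ∈ S <;> by_cases hq : q ∈ S <;>
    simp only [collapseTo_of_mem, collapseTo_of_notMem, hp, hq, not_false_eq_true] at hpq ⊢
  · exact absurd rfl hpq
  · exact ⟨hS.lt_of_lt_of_notMem hp hx hq, hS.lt_of_lt_of_notMem hx hp hq⟩
  · exact ⟨hS.lt_of_gt_of_notMem hq hx hp, hS.lt_of_gt_of_notMem hx hq hp⟩

theorem mem_inflate {A B : Set PPerm} {σ τ : PPerm} (hS : IsInterval π S) (hx : x ∈ S)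
    (hσ : PatternOf π (insert x Sᶜ) σ) (hτ : PatternOf π S τ) (hσA : σ ∈ A) (hτB : τ ∈ B)
    (hone : pone ∈ B) : π ∈ Inflate A B := by
  obtain ⟨e, he, herange, heπ⟩ := hσ
  obtain ⟨g, hg_mono, hg_surj, hge⟩ := exists_monotone_surjective_comp_eq he
    (hS.monotone_collapseTo hx) (by rw [herange, range_collapseTo hx])
  have hcollapse : ∀ p, e (g p) = collapseTo S x p := congrFun hge
  have hfiber : ∀ b, {p | g p = b} = {p | collapseTo S x p = e b} := fun b => by
    ext p
    change g p = b ↔ collapseTo S x p = e b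
    rw [← hcollapse, he.injective.eq_iff]
  refine ⟨σ, hσA, g, hg_mono, hg_surj, fun p q hne => ?_, fun b => ?_⟩
  · rw [heπ, hcollapse, hcollapse]
    exact hS.lt_iff_collapseTo_lt hx (by rwa [← hcollapse, ← hcollapse, he.injective.ne_iff])
  · rw [hfiber]
    rcases (herange ▸ Set.mem_range_self b : e b ∈ insert x Sᶜ) with hb | hb
    · exact ⟨τ, hτB, by rwa [hb, setOf_collapseTo_eq_self hx]⟩
    · refine ⟨pone, hone, ?_⟩
      rw [setOf_collapseTo_eq_of_notMem hx hb]
      exact patternOf_singleton π _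

end IsInterval

theorem simplePerm_of_mem_pBasis {C : Set PPerm} (hC : Inflate C C ⊆ C) {β : PPerm}
    (hβ : β ∈ PBasis C) : SimplePerm β := by
  intro S hS
  by_contra! hS'
  obtain ⟨⟨x, hx, y, hy, hxy⟩, hSuniv⟩ := hS'
  obtain ⟨σ, hσ⟩ := exists_patternOf β (insert x Sᶜ)
  obtain ⟨τ, hτ⟩ := exists_patternOf β S
  have hy_mem : y ∉ insert x Sᶜ := by
    rintro (h | h)
    exacts [hxy h.symm, h hy]
  have hlen : 1 < β.1 := by
    by_contra!
    exact hxy (Fin.ext (by omega))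
  refine hβ.1 (hC (hS.mem_inflate hx hσ hτ ?_ ?_ ?_))
  · exact mem_of_mem_pBasis_of_length_lt hβ hσ.contains
      (hσ.length_lt fun h => hy_mem (h ▸ Set.mem_univ y))
  · exact mem_of_mem_pBasis_of_length_lt hβ hτ.contains (hτ.length_lt hSuniv)
  · exact mem_of_mem_pBasis_of_length_lt hβ (contains_pone (by omega)) hlen

theorem isInterval_fiber {β σ : PPerm} {h : Fin β.1 → Fin σ.1} (hmono : Monotone h)
    (hord : ∀ i j, h i ≠ h j → (β.2 i < β.2 j ↔ σ.2 (h i) < σ.2 (h j))) (b : Fin σ.1) :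
    IsInterval β {c | h c = b} := by
  refine ⟨fun a ha a' ha' c hac hca => le_antisymm (ha' ▸ hmono hca) (ha ▸ hmono hac),
    fun a ha a' ha' c hac hca => ?_⟩
  by_contra hc
  have hac' : β.2 a < β.2 c := hac.lt_of_ne (β.2.injective.ne (ne_of_mem_of_not_mem ha hc))
  have hca' : β.2 c < β.2 a' := hca.lt_of_ne (β.2.injective.ne (ne_of_mem_of_not_mem ha' hc).symm)
  have h₁ := (hord a c (ha.trans_ne (Ne.symm hc))).mp hac'
  have h₂ := (hord c a' (Ne.symm (ha'.trans_ne (Ne.symm hc)))).mp hca'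
  rw [(ha : h a = b)] at h₁
  rw [(ha' : h a' = b)] at h₂
  exact lt_asymm h₁ h₂

theorem inflate_subset_of_forall_simplePerm {C : Set PPerm} (hC : IsPermClass C)
    (hsimple : ∀ β ∈ PBasis C, SimplePerm β) : Inflate C C ⊆ C := by
  rintro π ⟨σ, hσC, g, hg_mono, -, hg_ord, hblocks⟩
  by_contra hπC
  obtain ⟨β, hβ, f, hf, hfπ⟩ := exists_mem_pBasis_contains hπC
  have hord : ∀ i j, g (f i) ≠ g (f j) → (β.2 i < β.2 j ↔ σ.2 (g (f i)) < σ.2 (g (f j))) :=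
    fun i j hne => (hfπ i j).trans (hg_ord _ _ hne)
  by_cases hinj : Injective (g ∘ f)
  · refine hβ.1 (hC σ hσC β ⟨g ∘ f, (hg_mono.comp hf.monotone).strictMono_of_injective hinj,
      fun i j => ?_⟩)
    rcases eq_or_ne i j with rfl | hij
    · exact iff_of_false (lt_irrefl _) (lt_irrefl _)
    · exact hord i j (hinj.ne hij)
  · obtain ⟨i, j, hgij, hij⟩ := not_injective_iff.mp hinj
    have hfiber : {c | g (f c) = g (f i)} = Set.univ :=
      (hsimple β hβ _ (isInterval_fiber (hg_mono.comp hf.monotone) hord _)).resolve_left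
        fun hsub => hij (hsub rfl hgij.symm)
    have hβ_in_block : ContainsIn π {p | g p = g (f i)} β :=
      ⟨f, hf, fun c => (hfiber ▸ Set.mem_univ c : c ∈ {c | g (f c) = g (f i)}), hfπ⟩
    obtain ⟨τ, hτC, hτ⟩ := hblocks (g (f i))
    exact hβ.1 (hC τ hτC β (hβ_in_block.contains_of_patternOf hτ))

theorem subset_inflate_self {C : Set PPerm} (hC : IsPermClass C) : C ⊆ Inflate C C := by
  intro π hπ
  refine ⟨π, hπ, id, monotone_id, surjective_id, fun _ _ _ => Iff.rfl, fun b => ?_⟩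
  exact ⟨pone, hC π hπ pone (contains_pone b.pos), patternOf_singleton π b⟩

/-- `C = C[C]` iff every basis element of `C` is simple. -/
theorem stmt9 (C : Set PPerm) (hC : IsPermClass C) :
    Inflate C C = C ↔ ∀ π ∈ PBasis C, SimplePerm π :=
  ⟨fun h _ => simplePerm_of_mem_pBasis h.subset, fun h =>
    (inflate_subset_of_forall_simplePerm hC h).antisymm (subset_inflate_self hC)⟩
end
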